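/- Let p be an odd prime, r a nonzero quadratic residue in 𝔽_p, and E ⊆ 𝔽_p² with |E| ≥ 3p. Then there exist (x₁,x₂,x₃) ∈ E³ and (y₁,y₂,y₃) ∈ E³ with xᵢ ≠ xⱼ and yᵢ ≠ yⱼ for i ≠ j, such that ‖yᵢ − yᵢ₊₁‖ = r‖xᵢ − xᵢ₊₁‖ for i = 1,2 and ‖y₃ − y₁‖ = r‖x₃ − x₁‖. -/

import Mathlib

def sqnorm {p d : ℕ} (α : Fin d → ZMod p) : ZMod p := ∑ i, α i ^ 2

/-!
Write `r = c²`. The map `a ↦ c • a + t` multiplies every `sqnorm` of a difference by `r`, so it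
suffices to find a translate `t` for which three points `a ∈ E` have `c • a + t ∈ E`. Averaging over
all `t`, each pair `(a, b) ∈ E × E` is counted for exactly one `t`, so some `t` is hit at least
`|E|² / p² ≥ 9` times.
-/

open Finset

lemma sqnorm_smul {p d : ℕ} (c : ZMod p) (v : Fin d → ZMod p) :
    sqnorm (c • v) = c ^ 2 * sqnorm v := by
  simp only [sqnorm, mul_sum, Pi.smul_apply, smul_eq_mul, mul_pow]

lemma Finset.exists_injective_fin_of_le_card {α : Type*} {s : Finset α} {n : ℕ}
    (h : n ≤ #s) : ∃ x : Fin n → α, Function.Injective x ∧ ∀ i, x i ∈ s := by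
  obtain ⟨e⟩ : Nonempty (Fin n ↪ s) := Function.Embedding.nonempty_of_card_le (by simpa using h)
  exact ⟨fun i => e i, Subtype.val_injective.comp e.injective, fun i => (e i).2⟩

section Translates

variable {G : Type*} [AddCommGroup G] [Fintype G] [DecidableEq G]

lemma sum_card_filter_add_mem (f : G → G) (E : Finset G) :
    ∑ t, #{a ∈ E | f a + t ∈ E} = #E * #E := by
  have translate (a : G) : #{t | f a + t ∈ E} = #E := by
    rw [card_filter]
    exact (Equiv.sum_comp (Equiv.addLeft (f a)) (fun s => if s ∈ E then 1 else 0)).trans <| by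
      rw [← card_filter, filter_mem_eq_inter, univ_inter]
  calc ∑ t, #{a ∈ E | f a + t ∈ E} = ∑ a ∈ E, #{t | f a + t ∈ E} := by
        simp only [card_filter]; exact sum_comm
    _ = #E * #E := by simp only [translate, sum_const, smul_eq_mul]

lemma exists_lt_card_filter_add_mem (f : G → G) (E : Finset G) {n : ℕ}
    (h : n * Fintype.card G < #E * #E) : ∃ t, n < #{a ∈ E | f a + t ∈ E} := by
  have : ∑ _t : G, n < ∑ t, #{a ∈ E | f a + t ∈ E} := by
    rwa [sum_card_filter_add_mem, sum_const, card_univ, smul_eq_mul, mul_comm]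
  obtain ⟨t, -, ht⟩ := exists_lt_of_sum_lt this
  exact ⟨t, ht⟩

end Translates

theorem stmt8_general (p : ℕ) [Fact p.Prime]
    (r : ZMod p) (hr : r ≠ 0) (hsq : IsSquare r)
    (E : Finset (Fin 2 → ZMod p)) (hE : 3 * p ≤ E.card) :
    ∃ x y : Fin 3 → (Fin 2 → ZMod p),
      (∀ i, x i ∈ E) ∧ (∀ i, y i ∈ E) ∧
      (∀ i : Fin 2, sqnorm (y i.castSucc - y i.succ) = r * sqnorm (x i.castSucc - x i.succ)) ∧
      sqnorm (y 2 - y 0) = r * sqnorm (x 2 - x 0) ∧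
      (∀ i j, i ≠ j → x i ≠ x j ∧ y i ≠ y j) := by
  obtain ⟨c, rfl⟩ := hsq
  have hc : c ≠ 0 := by rintro rfl; simp at hr
  have hp : 0 < p := (Fact.out : p.Prime).pos
  have hcard : 2 * Fintype.card (Fin 2 → ZMod p) < #E * #E := by
    simp only [Fintype.card_fun, ZMod.card, Fintype.card_fin]
    nlinarith
  obtain ⟨t, ht⟩ := exists_lt_card_filter_add_mem (c • ·) E hcard
  obtain ⟨x, hx_inj, hx⟩ := exists_injective_fin_of_le_card ht
  simp only [mem_filter] at hx
  set y := fun i => c • x i + t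
  have hy_inj : Function.Injective y :=
    ((add_left_injective t).comp (smul_right_injective _ hc)).comp hx_inj
  have hscale (i j : Fin 3) : sqnorm (y i - y j) = c * c * sqnorm (x i - x j) := by
    rw [show y i - y j = c • (x i - x j) by simp only [y, smul_sub]; abel, sqnorm_smul, sq]
  exact ⟨x, y, fun i => (hx i).1, fun i => (hx i).2, fun i => hscale _ _, hscale 2 0,
    fun i j hij => ⟨hx_inj.ne hij, hy_inj.ne hij⟩⟩

theorem stmt8 (p : ℕ) [Fact p.Prime] (hodd : Odd p)
    (r : ZMod p) (hr : r ≠ 0) (hsq : IsSquare r)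
    (E : Finset (Fin 2 → ZMod p)) (hE : 3 * p ≤ E.card) :
    ∃ x y : Fin 3 → (Fin 2 → ZMod p),
      (∀ i, x i ∈ E) ∧ (∀ i, y i ∈ E) ∧
      (∀ i : Fin 2, sqnorm (y i.castSucc - y i.succ) = r * sqnorm (x i.castSucc - x i.succ)) ∧
      sqnorm (y 2 - y 0) = r * sqnorm (x 2 - x 0) ∧
      (∀ i j, i ≠ j → x i ≠ x j ∧ y i ≠ y j) :=
  stmt8_general p r hr hsq E hE
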